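/- arXiv:2010.04677 — 4 statements merged into one kernel-verified Lean document; each statement's English description precedes it below -/
import Mathlib

section
/- Define on X = (Δ_{n²})^m × Δ_n the norm ‖x‖_X = sqrt(Σ_{i=1}^m ‖x_i‖₁² + m‖p‖₁²) for x = (x₁,…,x_m,p). Then for the block matrix 𝐀 with blocks (A, …, A) on the diagonal acting on the x_i and a last block ℰ with i-th block (−I_n, 0) acting on p, one has max over ‖x‖_X ≤ 1 of ‖𝐀x‖₂² ≤ 2, where the components of x are additionally required to be entrywise nonnegative. -/
/-!
Each block of `𝐀x` is bounded separately. Since `xᵢ` and `p` are nonnegative, the cross term of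
`(rowSum xᵢ - p)²` has the right sign, so the block has squared norm at most
`‖rowSum xᵢ‖² + ‖p‖² + ‖colSum xᵢ‖²`; for nonnegative vectors `‖·‖₂ ≤ ‖·‖₁`, which bounds this by
`2 ‖xᵢ‖₁² + ‖p‖₁²`. Summing over `i` gives at most `2 ‖x‖_X²`.
-/

open Finset

lemma sub_sq_le_sq_add_sq {R : Type*} [CommRing R] [LinearOrder R] [IsStrictOrderedRing R]
    {a b : R} (ha : 0 ≤ a) (hb : 0 ≤ b) : (a - b) ^ 2 ≤ a ^ 2 + b ^ 2 := by
  nlinarith [mul_nonneg ha hb]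

lemma marginal_residual_sq_le {ι κ : Type*} [Fintype ι] [Fintype κ] {y : ι → κ → ℝ}
    {q : ι → ℝ} (hy : ∀ j k, 0 ≤ y j k) (hq : ∀ j, 0 ≤ q j) :
    (∑ j, ((∑ k, y j k) - q j) ^ 2) + ∑ k, (∑ j, y j k) ^ 2
      ≤ 2 * (∑ j, ∑ k, y j k) ^ 2 + (∑ j, q j) ^ 2 := by
  have hrow : ∀ j, 0 ≤ ∑ k, y j k := fun j => sum_nonneg fun k _ => hy j k
  have hcol : ∀ k, 0 ≤ ∑ j, y j k := fun k => sum_nonneg fun j _ => hy j k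
  calc (∑ j, ((∑ k, y j k) - q j) ^ 2) + ∑ k, (∑ j, y j k) ^ 2
      ≤ (∑ j, (∑ k, y j k) ^ 2 + ∑ j, q j ^ 2) + ∑ k, (∑ j, y j k) ^ 2 := by
        rw [← sum_add_distrib]
        gcongr with j
        exact sub_sq_le_sq_add_sq (hrow j) (hq j)
    _ ≤ ((∑ j, ∑ k, y j k) ^ 2 + (∑ j, q j) ^ 2) + (∑ k, ∑ j, y j k) ^ 2 := by
        gcongr
        exacts [sum_sq_le_sq_sum_of_nonneg fun j _ => hrow j,
          sum_sq_le_sq_sum_of_nonneg fun j _ => hq j, sum_sq_le_sq_sum_of_nonneg fun k _ => hcol k]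
    _ = 2 * (∑ j, ∑ k, y j k) ^ 2 + (∑ j, q j) ^ 2 := by
        rw [sum_comm (f := fun k j => y j k)]
        ring

-- The `i`-th `2n`-block of `𝐀x` is `A xᵢ − (pᵀ, 0ᵀ)ᵀ`: the row sums of `xᵢ` minus `p`, then the
-- column sums of `xᵢ`.
theorem block_matrix_l2_bound_general (n m : ℕ)
    (x : Fin m → Fin n → Fin n → ℝ) (p : Fin n → ℝ)
    (hx : ∀ i j k, 0 ≤ x i j k) (hp : ∀ j, 0 ≤ p j)
    (hnorm : (∑ i, (∑ j, ∑ k, x i j k) ^ 2) + m * (∑ j, p j) ^ 2 ≤ 1) :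
    ∑ i, ((∑ j, ((∑ k, x i j k) - p j) ^ 2) + ∑ k, (∑ j, x i j k) ^ 2) ≤ 2 := by
  calc ∑ i, ((∑ j, ((∑ k, x i j k) - p j) ^ 2) + ∑ k, (∑ j, x i j k) ^ 2)
      ≤ ∑ i : Fin m, (2 * (∑ j, ∑ k, x i j k) ^ 2 + (∑ j, p j) ^ 2) :=
        sum_le_sum fun i _ => marginal_residual_sq_le (hx i) hp
    _ = 2 * (∑ i, (∑ j, ∑ k, x i j k) ^ 2) + m * (∑ j, p j) ^ 2 := by
        simp only [sum_add_distrib, mul_sum, sum_const, card_univ, Fintype.card_fin, nsmul_eq_mul]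
    _ ≤ 2 := by
        have : 0 ≤ (m : ℝ) * (∑ j, p j) ^ 2 := by positivity
        linarith

/-- For the block matrix `𝐀` of the WB saddle-point reformulation (diagonal
blocks `A` acting on the `x_i`, last block `ℰ` with `i`-th block `(−I_n, 0)`
acting on `p`), and any nonnegative `x = (x₁,…,x_m,p)` with
`‖x‖_X² = Σᵢ ‖xᵢ‖₁² + m‖p‖₁² ≤ 1`, one has `‖𝐀x‖₂² ≤ 2`.  The `i`-th `2n`-block
of `𝐀x` is `A xᵢ − (pᵀ, 0ᵀ)ᵀ`, i.e. row sums of `xᵢ` minus `p`, then column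
sums of `xᵢ`. -/
theorem block_matrix_l2_bound (n m : ℕ) (hn : 0 < n) (hm : 0 < m)
    (x : Fin m → Fin n → Fin n → ℝ) (p : Fin n → ℝ)
    (hx : ∀ i j k, 0 ≤ x i j k) (hp : ∀ j, 0 ≤ p j)
    (hnorm : (∑ i, (∑ j, ∑ k, x i j k) ^ 2) + m * (∑ j, p j) ^ 2 ≤ 1) :
    ∑ i, ((∑ j, ((∑ k, x i j k) - p j) ^ 2) + ∑ k, (∑ j, x i j k) ^ 2) ≤ 2 :=
  block_matrix_l2_bound_general n m x p hx hp hnorm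
end

section
/- The bilinear function f(x,y) = yᵀ𝐀x on X × Y, with X endowed with the norm ‖x‖_X = sqrt(Σ_i ‖x_i‖₁² + m‖p‖₁²) restricted to nonnegative vectors and Y = [−1,1]^{2mn} with the Euclidean norm, satisfies the Lipschitz-gradient cross-bound: for all x, y, y′, ‖∇_x f(x,y) − ∇_x f(x,y′)‖_{X*} ≤ √2 ‖y − y′‖₂. -/
/-! By Cauchy–Schwarz it suffices that `‖𝐀x‖₂² ≤ 2`. For nonnegative vectors the ℓ² norm is at
most the ℓ¹ norm, and `(a - b)² ≤ a² + b²`; so block `i` of `𝐀x` (the row sums of `xᵢ` minus `p`,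
and the column sums of `xᵢ`) has squared norm at most `2‖xᵢ‖₁² + ‖p‖₁²`. Summing over `i` gives
at most `2 (Σᵢ ‖xᵢ‖₁² + m‖p‖₁²) ≤ 2`. -/

open Finset

lemma sum_blocks_mul_le_sqrt_mul_sqrt {μ ι κ : Type*} [Fintype μ] [Fintype ι] [Fintype κ]
    (a u : μ → ι → ℝ) (b v : μ → κ → ℝ) :
    ∑ i, (∑ j, a i j * u i j + ∑ k, b i k * v i k) ≤
      √(∑ i, (∑ j, a i j ^ 2 + ∑ k, b i k ^ 2)) *
        √(∑ i, (∑ j, u i j ^ 2 + ∑ k, v i k ^ 2)) := by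
  simpa only [Fintype.sum_prod_type, Fintype.sum_sum_type, Sum.elim_inl, Sum.elim_inr] using
    Real.sum_mul_le_sqrt_mul_sqrt (univ : Finset (μ × (ι ⊕ κ)))
      (fun z => Sum.elim (a z.1) (b z.1) z.2) (fun z => Sum.elim (u z.1) (v z.1) z.2)

lemma sum_sub_sq_le_sq_sum_add_sq_sum {ι : Type*} {s : Finset ι} {a b : ι → ℝ}
    (ha : ∀ j ∈ s, 0 ≤ a j) (hb : ∀ j ∈ s, 0 ≤ b j) :
    ∑ j ∈ s, (a j - b j) ^ 2 ≤ (∑ j ∈ s, a j) ^ 2 + (∑ j ∈ s, b j) ^ 2 :=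
  calc ∑ j ∈ s, (a j - b j) ^ 2 ≤ ∑ j ∈ s, (a j ^ 2 + b j ^ 2) :=
        sum_le_sum fun j hj => by nlinarith [mul_nonneg (ha j hj) (hb j hj)]
    _ ≤ (∑ j ∈ s, a j) ^ 2 + (∑ j ∈ s, b j) ^ 2 := by
        rw [sum_add_distrib]
        exact add_le_add (sum_sq_le_sq_sum_of_nonneg ha) (sum_sq_le_sq_sum_of_nonneg hb)

lemma sum_sq_row_sub_add_sum_sq_col_le {ι κ : Type*} [Fintype ι] [Fintype κ]
    (x : ι → κ → ℝ) (p : ι → ℝ) (hx : ∀ j k, 0 ≤ x j k) (hp : ∀ j, 0 ≤ p j) :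
    ∑ j, (∑ k, x j k - p j) ^ 2 + ∑ k, (∑ j, x j k) ^ 2 ≤
      2 * (∑ j, ∑ k, x j k) ^ 2 + (∑ j, p j) ^ 2 := by
  have hrows : ∑ j, (∑ k, x j k - p j) ^ 2 ≤ (∑ j, ∑ k, x j k) ^ 2 + (∑ j, p j) ^ 2 :=
    sum_sub_sq_le_sq_sum_add_sq_sum (fun j _ => sum_nonneg fun k _ => hx j k) fun j _ => hp j
  have hcols : ∑ k, (∑ j, x j k) ^ 2 ≤ (∑ j, ∑ k, x j k) ^ 2 := by
    rw [sum_comm (f := x)]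
    exact sum_sq_le_sq_sum_of_nonneg fun k _ => sum_nonneg fun j _ => hx j k
  linarith

/-- For the bilinear function `f(x,y) = yᵀ𝐀x`, with `∇ₓ f(x,y) = 𝐀ᵀy` and dual
norm `‖s‖_{X*} = max{⟨s,x⟩ : ‖x‖_X ≤ 1, x ≥ 0}`, one has
`‖∇ₓ f(x,y) − ∇ₓ f(x,y′)‖_{X*} ≤ √2 ‖y − y′‖₂`.  Spelled out: for every
nonnegative `x = (x₁,…,x_m,p)` with `Σᵢ ‖xᵢ‖₁² + m‖p‖₁² ≤ 1` and all
`y, y′ ∈ ℝ^{2mn}` (written as blocks `(ya i, yb i)`),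
`⟨𝐀x, y − y′⟩ ≤ √2 ‖y − y′‖₂`. -/
theorem cross_lipschitz_bound (n m : ℕ)
    (x : Fin m → Fin n → Fin n → ℝ) (p : Fin n → ℝ)
    (hx : ∀ i j k, 0 ≤ x i j k) (hp : ∀ j, 0 ≤ p j)
    (hnorm : (∑ i, (∑ j, ∑ k, x i j k) ^ 2) + m * (∑ j, p j) ^ 2 ≤ 1)
    (ya ya' yb yb' : Fin m → Fin n → ℝ) :
    (∑ i, ((∑ j, ((∑ k, x i j k) - p j) * (ya i j - ya' i j)) +
           ∑ k, (∑ j, x i j k) * (yb i k - yb' i k)))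
      ≤ Real.sqrt 2 *
        Real.sqrt (∑ i, ((∑ j, (ya i j - ya' i j) ^ 2) +
                         ∑ k, (yb i k - yb' i k) ^ 2)) := by
  refine (sum_blocks_mul_le_sqrt_mul_sqrt (fun i j => ∑ k, x i j k - p j)
    (fun i j => ya i j - ya' i j) (fun i k => ∑ j, x i j k)
    (fun i k => yb i k - yb' i k)).trans ?_
  gcongr
  calc ∑ i, (∑ j, (∑ k, x i j k - p j) ^ 2 + ∑ k, (∑ j, x i j k) ^ 2)
      ≤ ∑ i : Fin m, (2 * (∑ j, ∑ k, x i j k) ^ 2 + (∑ j, p j) ^ 2) :=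
        sum_le_sum fun i _ => sum_sq_row_sub_add_sum_sq_col_le (x i) p (hx i) hp
    _ = 2 * ∑ i, (∑ j, ∑ k, x i j k) ^ 2 + m * (∑ j, p j) ^ 2 := by
        simp [sum_add_distrib, mul_sum]
    _ ≤ 2 := by nlinarith [sq_nonneg (∑ j, p j), (Nat.cast_nonneg m : (0 : ℝ) ≤ m)]
end

section
/- Let p ∈ Δ_n with p > 0 entrywise, and let y ∈ [−1,1]. Then for all real a, b, u, v and each index pair, (5a²)/p_j + 4 a b y + 2 b² p_j + 2 a v − 2 u b + (5u²)/p_j + 4 u v y + 2 v² p_j ≥ 0. -/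
theorem area_convexity_entry_eq_sum_sq_div {K : Type*} [Field K] {p : K} (hp : p ≠ 0)
    (y a b u v : K) :
    5 * a ^ 2 / p + 4 * a * b * y + 2 * b ^ 2 * p + 2 * a * v - 2 * u * b
        + 5 * u ^ 2 / p + 4 * u * v * y + 2 * v ^ 2 * p
      = ((2 * a * y + b * p) ^ 2 + (2 * u * y + v * p) ^ 2 + (a + v * p) ^ 2
          + (u - b * p) ^ 2 + 4 * (1 - y ^ 2) * (a ^ 2 + u ^ 2)) / p := by
  field_simp
  ring

theorem area_convexity_entry_nonneg_of_pos {K : Type*} [Field K] [LinearOrder K]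
    [IsStrictOrderedRing K] {p : K} (hp : 0 < p) {y : K} (hy : y ∈ Set.Icc (-1 : K) 1)
    (a b u v : K) :
    0 ≤ 5 * a ^ 2 / p + 4 * a * b * y + 2 * b ^ 2 * p + 2 * a * v - 2 * u * b
        + 5 * u ^ 2 / p + 4 * u * v * y + 2 * v ^ 2 * p := by
  have hy_sq : 0 ≤ 1 - y ^ 2 := by nlinarith [hy.1, hy.2]
  rw [area_convexity_entry_eq_sum_sq_div hp.ne']
  positivity

theorem area_convexity_entry_nonneg_general (n : ℕ) (p : Fin n → ℝ)
    (hp : ∀ j, 0 < p j)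
    (y : ℝ) (hy : y ∈ Set.Icc (-1 : ℝ) 1) (a b u v : ℝ) (j : Fin n) :
    0 ≤ 5 * a ^ 2 / p j + 4 * a * b * y + 2 * b ^ 2 * p j + 2 * a * v - 2 * u * b
        + 5 * u ^ 2 / p j + 4 * u * v * y + 2 * v ^ 2 * p j :=
  area_convexity_entry_nonneg_of_pos (hp j) hy a b u v

/-- Per-entry inequality underlying the positive semidefiniteness of the
remaining block in the area-convexity proof: for `p ∈ Δ_n` with `p > 0`,
`y ∈ [−1,1]`, all reals `a, b, u, v` and each index `j`,
`5a²/p_j + 4aby + 2b²p_j + 2av − 2ub + 5u²/p_j + 4uvy + 2v²p_j ≥ 0`. -/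
theorem area_convexity_entry_nonneg (n : ℕ) (p : Fin n → ℝ)
    (hp : ∀ j, 0 < p j) (hps : ∑ j, p j = 1)
    (y : ℝ) (hy : y ∈ Set.Icc (-1 : ℝ) 1) (a b u v : ℝ) (j : Fin n) :
    0 ≤ 5 * a ^ 2 / p j + 4 * a * b * y + 2 * b ^ 2 * p j + 2 * a * v - 2 * u * b
        + 5 * u ^ 2 / p j + 4 * u * v * y + 2 * v ^ 2 * p j :=
  area_convexity_entry_nonneg_general n p hp y hy a b u v j
end

section
/- Suppose F(x,y) is convex in x, concave in y, and (L_{xx}, L_{xy}, L_{yx}, L_{yy})-smooth with respect to norms ‖·‖_X, ‖·‖_Y on compact convex sets X, Y with Bregman radii R_X, R_Y. Then mirror prox on Z = X×Y with Bregman divergence B_Z(z,z̆) = (1/R_X²)B_X(x,x̆) + (1/R_Y²)B_Y(y,y̆) and step η = 1/(2 max{L_{xx}R_X², L_{xy}R_XR_Y, L_{yx}R_YR_X, L_{yy}R_Y²}) outputs averaged iterates (x̃,ỹ) satisfying max_{y∈Y}F(x̃,y) − min_{x∈X}F(x,ỹ) ≤ ε after N = (4/ε)·max{L_{xx}R_X²,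 L_{xy}R_XR_Y, L_{yx}R_YR_X, L_{yy}R_Y²} iterations. -/
open RealInnerProductSpace

/-!
Convexity in `x` and concavity in `y` bound `η (φ(u, y) - φ(x, v))` by `η ⟪G(u, v), (u, v) - (x, y)⟫`
for the monotone operator `G = (∇ₓφ, -∇ᵧφ)`. The optimality conditions of the two prox steps, with
the three-point identity of Bregman divergences, rewrite this as the telescoping difference
`B_Z((x, y), zₖ) - B_Z((x, y), zₖ₊₁)` plus the residual `η ⟪G(u, v) - G(zₖ), (u, v) - zₖ₊₁⟫`
minus three divergences; mixed smoothness, strong convexity, AM-GM and the choice of `η` make the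
residual smaller than those divergences. Summing over `k`, the initial divergence is at most `2`
and Jensen's inequality for the averages gives a gap of at most `2 / (η N) = 4 L / N ≤ ε`.

The `x`-residual pairs `u - x'` with `B_X(x', u)`, whereas strong convexity bounds `B_X(x', u)` by
`nX (x' - u)`, and `nX` need be neither symmetric nor homogeneous. Strong convexity along the
segment, iterated over dyadic subdivisions, still bounds the reversed divergence.
-/

section FirstOrder

variable {E : Type*} [NormedAddCommGroup E] [InnerProductSpace ℝ E] [CompleteSpace E]
  {X : Set E} {f : E → ℝ} {g w x : E}

theorem HasGradientAt.hasDerivAt_comp_lineMap (hf : HasGradientAt f g w) (x : E) :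
    HasDerivAt (f ∘ AffineMap.lineMap (k := ℝ) w x) ⟪g, x - w⟫ 0 := by
  have hf' : HasFDerivAt f (InnerProductSpace.toDual ℝ E g) (AffineMap.lineMap w x (0 : ℝ)) := by
    simpa using hf.hasFDerivAt
  exact hf'.comp_hasDerivAt 0 AffineMap.hasDerivAt_lineMap

theorem ConvexOn.add_inner_sub_le_of_hasGradientAt (hf : ConvexOn ℝ X f)
    (hg : HasGradientAt f g w) (hw : w ∈ X) (hx : x ∈ X) : f w + ⟪g, x - w⟫ ≤ f x := by
  have hψ : ConvexOn ℝ (Set.Icc 0 1) (f ∘ AffineMap.lineMap (k := ℝ) w x) :=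
    (hf.comp_affineMap _).subset (hf.1.mapsTo_lineMap hw hx) (convex_Icc 0 1)
  have := hψ.le_slope_of_hasDerivAt (by simp) (by simp) zero_lt_one
    (HasGradientAt.hasDerivAt_comp_lineMap hg x)
  simp only [slope_def_field, Function.comp_apply, AffineMap.lineMap_apply_one,
    AffineMap.lineMap_apply_zero, sub_zero, div_one] at this
  linarith

theorem ConcaveOn.le_add_inner_sub_of_hasGradientAt (hf : ConcaveOn ℝ X f)
    (hg : HasGradientAt f g w) (hw : w ∈ X) (hx : x ∈ X) : f x ≤ f w + ⟪g, x - w⟫ := by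
  have hψ : ConcaveOn ℝ (Set.Icc 0 1) (f ∘ AffineMap.lineMap (k := ℝ) w x) :=
    (hf.comp_affineMap _).subset (hf.1.mapsTo_lineMap hw hx) (convex_Icc 0 1)
  have := hψ.slope_le_of_hasDerivAt (by simp) (by simp) zero_lt_one
    (HasGradientAt.hasDerivAt_comp_lineMap hg x)
  simp only [slope_def_field, Function.comp_apply, AffineMap.lineMap_apply_one,
    AffineMap.lineMap_apply_zero, sub_zero, div_one] at this
  linarith

end FirstOrder

theorem IsMinOn.hasFDerivAt_apply_sub_nonneg {E : Type*} [NormedAddCommGroup E]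
    [NormedSpace ℝ E] {X : Set E} {f : E → ℝ} {f' : StrongDual ℝ E} {w x : E}
    (hX : Convex ℝ X) (hmin : IsMinOn f X w) (hf : HasFDerivAt f f' w) (hw : w ∈ X)
    (hx : x ∈ X) : 0 ≤ f' (x - w) :=
  (IsMinOn.localize hmin).hasFDerivWithinAt_nonneg hf.hasFDerivWithinAt
    (sub_mem_posTangentConeAt_of_segment_subset (hX.segment_subset hw hx))

section Bregman

variable {E : Type*} [NormedAddCommGroup E] [InnerProductSpace ℝ E]
  {X : Set E} {d : E → ℝ} {gd : E → E} {B : E → E → ℝ}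

theorem bregman_three_point (hB : ∀ x x', B x x' = d x - d x' - ⟪gd x', x - x'⟫)
    (x w p : E) : ⟪gd w - gd p, x - w⟫ = B x p - B w p - B x w := by
  simp only [hB, inner_sub_left, inner_sub_right]
  ring

theorem bregman_le_sub_of_isMinOn [CompleteSpace E] (hX : Convex ℝ X)
    (hB : ∀ x x', B x x' = d x - d x' - ⟪gd x', x - x'⟫) {w x : E}
    (hgd : HasGradientAt d (gd w) w) (hmin : IsMinOn d X w) (hw : w ∈ X) (hx : x ∈ X) :
    B x w ≤ d x - d w := by
  have := hmin.hasFDerivAt_apply_sub_nonneg hX hgd.hasFDerivAt hw hx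
  rw [InnerProductSpace.toDual_apply_apply] at this
  linarith [hB x w]

theorem one_div_sq_mul_bregman_le_one_of_isMinOn [CompleteSpace E] (hX : Convex ℝ X)
    (hB : ∀ x x', B x x' = d x - d x' - ⟪gd x', x - x'⟫) {w x : E} {R : ℝ}
    (hgd : HasGradientAt d (gd w) w) (hmin : IsMinOn d X w) (hw : w ∈ X) (hx : x ∈ X)
    (hR : ∀ x ∈ X, ∀ x' ∈ X, d x - d x' ≤ R ^ 2) :
    1 / R ^ 2 * B x w ≤ 1 :=
  calc 1 / R ^ 2 * B x w ≤ 1 / R ^ 2 * R ^ 2 := mul_le_mul_of_nonneg_left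
        ((bregman_le_sub_of_isMinOn hX hB hgd hmin hw hx).trans (hR x hx w hw)) (by positivity)
    _ ≤ 1 := by rw [one_div_mul_eq_div]; exact div_self_le_one _

theorem inner_sub_le_of_isMinOn_prox [CompleteSpace E] (hX : Convex ℝ X)
    (hB : ∀ x x', B x x' = d x - d x' - ⟪gd x', x - x'⟫) {a p w x : E} {c : ℝ}
    (hgd : HasGradientAt d (gd w) w) (hmin : IsMinOn (fun ξ => ⟪a, ξ⟫ + c * B ξ p) X w)
    (hw : w ∈ X) (hx : x ∈ X) :
    ⟪a, w - x⟫ ≤ c * (B x p - B x w - B w p) := by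
  -- Up to a constant, the prox objective is `⟪a - c • gd p, ξ⟫ + c * d ξ`.
  have hmin' : IsMinOn (fun ξ => ⟪a - c • gd p, ξ⟫ + c * d ξ) X w := fun ξ hξ => by
    have := hmin hξ
    simp only [Set.mem_ofPred_eq, hB, inner_sub_left, inner_sub_right, real_inner_smul_left] at this ⊢
    linarith
  have hderiv : HasFDerivAt (fun ξ => ⟪a - c • gd p, ξ⟫ + c * d ξ)
      (innerSL ℝ (a - c • gd p) + c • InnerProductSpace.toDual ℝ E (gd w)) w :=
    (innerSL ℝ _).hasFDerivAt.add (hgd.hasFDerivAt.const_mul c)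
  have hopt := hmin'.hasFDerivAt_apply_sub_nonneg hX hderiv hw hx
  simp only [add_apply, smul_apply, innerSL_apply_apply,
    InnerProductSpace.toDual_apply_apply, smul_eq_mul] at hopt
  have h3 := bregman_three_point hB x w p
  simp only [inner_sub_left, real_inner_smul_left, inner_sub_right] at hopt h3 ⊢
  linear_combination hopt + c * h3

theorem inner_sub_le_of_extragradient [CompleteSpace E] (hX : Convex ℝ X)
    (hgd : ∀ x ∈ X, HasGradientAt d (gd x) x)
    (hB : ∀ x x', B x x' = d x - d x' - ⟪gd x', x - x'⟫) {c : ℝ} {g₀ g₁ p u x' x : E}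
    (hu : u ∈ X) (hx' : x' ∈ X) (hx : x ∈ X)
    (hmin₀ : IsMinOn (fun ξ => ⟪g₀, ξ⟫ + c * B ξ p) X u)
    (hmin₁ : IsMinOn (fun ξ => ⟪g₁, ξ⟫ + c * B ξ p) X x') :
    ⟪g₁, u - x⟫ ≤ c * (B x p - B x x') - c * (B u p + B x' u) + ⟪g₁ - g₀, u - x'⟫ := by
  have h₀ := inner_sub_le_of_isMinOn_prox hX hB (hgd u hu) hmin₀ hu hx'
  have h₁ := inner_sub_le_of_isMinOn_prox hX hB (hgd x' hx') hmin₁ hx' hx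
  have hsplit : ⟪g₁, u - x⟫ = ⟪g₁, x' - x⟫ + ⟪g₀, u - x'⟫ + ⟪g₁ - g₀, u - x'⟫ := by
    simp only [inner_sub_left, inner_sub_right]; ring
  linarith

theorem le_bregman_of_le_bregman_segment
    (hB : ∀ x x', B x x' = d x - d x' - ⟪gd x', x - x'⟫) {q r : E} {c : ℝ}
    (hnonneg : ∀ s t : ℝ, 0 ≤ s → s ≤ t → t ≤ 1 →
      0 ≤ B (q + s • (r - q)) (q + t • (r - q)))
    (hfwd : ∀ s t : ℝ, 0 ≤ s → s ≤ t → t ≤ 1 →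
      c * (t - s) ^ 2 ≤ B (q + t • (r - q)) (q + s • (r - q))) :
    c ≤ B q r := by
  set z : ℝ → E := fun t => q + t • (r - q)
  have hseg : ∀ s t, B (z s) (z t) = d (z s) - d (z t) - (s - t) * ⟪gd (z t), r - q⟫ := by
    intro s t
    rw [hB, show z s - z t = (s - t) • (r - q) by simp only [z, sub_smul]; abel,
      real_inner_smul_right]
  -- Halving `[a, b]` at `m` gives `B(a,b) = B(a,m) + 2 B(m,b) + B(b,m)`; only the last term
  -- is a forward divergence, which improves the constant `1 - (3/4)^n` at each halving.
  have hdyadic : ∀ n : ℕ, ∀ a b : ℝ, 0 ≤ a → a ≤ b → b ≤ 1 →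
      (1 - (3 / 4 : ℝ) ^ n) * c * (b - a) ^ 2 ≤ B (z a) (z b) := by
    intro n
    induction n with
    | zero => intro a b ha hab hb; simpa using hnonneg a b ha hab hb
    | succ n ih =>
      intro a b ha hab hb
      have hsplit : B (z a) (z b) =
          B (z a) (z ((a + b) / 2)) + 2 * B (z ((a + b) / 2)) (z b)
            + B (z b) (z ((a + b) / 2)) := by
        simp only [hseg]; ring
      have h₁ := ih a ((a + b) / 2) ha (by linarith) (by linarith)
      have h₂ := ih ((a + b) / 2) b (by linarith) (by linarith) hb
      have h₃ := hfwd ((a + b) / 2) b (by linarith) (by linarith) hb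
      rw [hsplit, pow_succ]
      nlinarith
  have hlim : Filter.Tendsto (fun n : ℕ => (1 - (3 / 4 : ℝ) ^ n) * c) Filter.atTop (nhds c) := by
    simpa using ((tendsto_pow_atTop_nhds_zero_of_lt_one (by norm_num : (0 : ℝ) ≤ 3 / 4)
      (by norm_num)).const_sub 1).mul_const c
  refine le_of_tendsto' hlim fun n => ?_
  simpa [z] using hdyadic n 0 1 le_rfl zero_le_one le_rfl

theorem half_sq_le_bregman_of_segment (hX : Convex ℝ X)
    (hB : ∀ x x', B x x' = d x - d x' - ⟪gd x', x - x'⟫) {n : E → ℝ}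
    (hsc : ∀ x ∈ X, ∀ x' ∈ X, (1 / 2) * n (x - x') ^ 2 ≤ B x x') {q r : E}
    (hq : q ∈ X) (hr : r ∈ X) {s : ℝ} (hs : 0 ≤ s)
    (hgrowth : ∀ t : ℝ, 0 ≤ t → t ≤ 1 → t * s ≤ n (t • (r - q))) :
    (1 / 2) * s ^ 2 ≤ B q r := by
  have hmem : ∀ t : ℝ, 0 ≤ t → t ≤ 1 → q + t • (r - q) ∈ X := fun t h₀ h₁ => by
    simpa [AffineMap.lineMap_apply_module', add_comm] using
      hX.lineMap_mem hq hr ⟨h₀, h₁⟩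
  refine le_bregman_of_le_bregman_segment hB (fun a b ha hab hb => ?_) (fun a b ha hab hb => ?_)
  · exact (by positivity : (0 : ℝ) ≤ (1 / 2) * _ ^ 2).trans
      (hsc _ (hmem a ha (hab.trans hb)) _ (hmem b (ha.trans hab) hb))
  · have hdiff : q + b • (r - q) - (q + a • (r - q)) = (b - a) • (r - q) := by
      rw [sub_smul]; abel
    have h := hsc _ (hmem b (ha.trans hab) hb) _ (hmem a ha (hab.trans hb))
    rw [hdiff] at h
    have hg := hgrowth (b - a) (by linarith) (by linarith)
    have : ((b - a) * s) ^ 2 ≤ n ((b - a) • (r - q)) ^ 2 :=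
      pow_le_pow_left₀ (mul_nonneg (by linarith) hs) hg 2
    nlinarith

theorem exists_inner_le_mul_of_half_sq_le_bregman (hX : Convex ℝ X)
    (hB : ∀ x x', B x x' = d x - d x' - ⟪gd x', x - x'⟫) {n : E → ℝ} (hn : ∀ w, 0 ≤ n w)
    (hsc : ∀ x ∈ X, ∀ x' ∈ X, (1 / 2) * n (x - x') ^ 2 ≤ B x x') {q r Δ : E} {K : ℝ}
    (hq : q ∈ X) (hr : r ∈ X) (hΔ : ∀ w, ⟪Δ, w⟫ ≤ K * n w) :
    ∃ s, 0 ≤ s ∧ s ^ 2 ≤ 2 * B q r ∧ ⟪Δ, r - q⟫ ≤ K * s := by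
  have hBnn : 0 ≤ B q r := (by positivity : (0 : ℝ) ≤ (1 / 2) * _ ^ 2).trans (hsc q hq r hr)
  rcases le_or_gt ⟪Δ, r - q⟫ 0 with hP | hP
  · exact ⟨0, le_rfl, by simpa using hBnn, by simpa using hP⟩
  have hK : 0 < K := by
    by_contra! hK
    linarith [hΔ (r - q), mul_nonpos_of_nonpos_of_nonneg hK (hn (r - q))]
  have hslope : ∀ t : ℝ, 0 ≤ t → t ≤ 1 → t * (⟪Δ, r - q⟫ / K) ≤ n (t • (r - q)) := fun t _ _ => by
    have := hΔ (t • (r - q))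
    rw [real_inner_smul_right] at this
    rw [← mul_div_assoc, div_le_iff₀ hK]
    linarith
  refine ⟨⟪Δ, r - q⟫ / K, by positivity, ?_, by rw [mul_div_cancel₀ _ hK.ne']⟩
  linarith [half_sq_le_bregman_of_segment hX hB hsc hq hr (by positivity) hslope]

end Bregman

theorem mul_le_of_sq_le_two_mul {η L₁ L₂ R R' a b s A B S : ℝ} (hR : 0 < R) (hR' : 0 < R')
    (ha : 0 ≤ a) (hb : 0 ≤ b) (hs : 0 ≤ s)
    (hL₁ : η * L₁ ≤ 1 / (2 * R ^ 2)) (hL₂ : η * L₂ ≤ 1 / (2 * (R * R')))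
    (ha2 : a ^ 2 ≤ 2 * A) (hb2 : b ^ 2 ≤ 2 * B) (hs2 : s ^ 2 ≤ 2 * S) :
    η * ((L₁ * a + L₂ * b) * s) ≤ 1 / R ^ 2 * A / 2 + 1 / R' ^ 2 * B / 2 + 1 / R ^ 2 * S := by
  have hK : η * (L₁ * a + L₂ * b) ≤ (a / R + b / R') / (2 * R) := by
    have h₁ := mul_le_mul_of_nonneg_right hL₁ ha
    have h₂ := mul_le_mul_of_nonneg_right hL₂ hb
    calc η * (L₁ * a + L₂ * b) = η * L₁ * a + η * L₂ * b := by ring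
      _ ≤ 1 / (2 * R ^ 2) * a + 1 / (2 * (R * R')) * b := add_le_add h₁ h₂
      _ = (a / R + b / R') / (2 * R) := by field_simp
  -- AM-GM: `(α + β) σ / 2 ≤ (α² + β²) / 4 + σ² / 2` with `α = a/R`, `β = b/R'`, `σ = s/R`.
  have hamgm : (a / R + b / R') / (2 * R) * s ≤
      (a / R) ^ 2 / 4 + (b / R') ^ 2 / 4 + (s / R) ^ 2 / 2 := by
    have : (a / R + b / R') / (2 * R) * s = (a / R + b / R') * (s / R) / 2 := by
      field_simp
    rw [this]
    nlinarith [sq_nonneg (a / R - b / R'), sq_nonneg ((a / R + b / R') / 2 - s / R)]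
  have hsq : (a / R) ^ 2 / 4 + (b / R') ^ 2 / 4 + (s / R) ^ 2 / 2 ≤
      1 / R ^ 2 * A / 2 + 1 / R' ^ 2 * B / 2 + 1 / R ^ 2 * S := by
    simp only [div_pow]
    gcongr ?_ + ?_ + ?_
    · rw [div_div, one_div_mul_eq_div, div_div, div_le_div_iff₀ (by positivity) (by positivity)]
      nlinarith
    · rw [div_div, one_div_mul_eq_div, div_div, div_le_div_iff₀ (by positivity) (by positivity)]
      nlinarith
    · rw [div_div, one_div_mul_eq_div, div_le_div_iff₀ (by positivity) (by positivity)]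
      nlinarith
  calc η * ((L₁ * a + L₂ * b) * s) = η * (L₁ * a + L₂ * b) * s := by ring
    _ ≤ (a / R + b / R') / (2 * R) * s := mul_le_mul_of_nonneg_right hK hs
    _ ≤ _ := hamgm.trans hsq

open Finset in
theorem sub_le_inv_card_mul_sum_of_convexOn_concaveOn {ι E F : Type*} [AddCommGroup E]
    [Module ℝ E] [AddCommGroup F] [Module ℝ F] {X : Set E} {Y : Set F} {φ : E → F → ℝ}
    {x : E} {y : F} (hconv : ConvexOn ℝ X fun x => φ x y) (hconc : ConcaveOn ℝ Y fun y => φ x y)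
    {s : Finset ι} (hs : s.Nonempty) {u : ι → E} {v : ι → F} (hu : ∀ i ∈ s, u i ∈ X)
    (hv : ∀ i ∈ s, v i ∈ Y) :
    φ ((#s : ℝ)⁻¹ • ∑ i ∈ s, u i) y - φ x ((#s : ℝ)⁻¹ • ∑ i ∈ s, v i)
      ≤ (#s : ℝ)⁻¹ * ∑ i ∈ s, (φ (u i) y - φ x (v i)) := by
  have hw : ∑ _i ∈ s, (#s : ℝ)⁻¹ = 1 := by
    rw [sum_const, nsmul_eq_mul, mul_inv_cancel₀ (by exact_mod_cast hs.card_ne_zero)]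
  have hu' := hconv.map_sum_le (fun _ _ => by positivity) hw hu
  have hv' := hconc.le_map_sum (fun _ _ => by positivity) hw hv
  simp only [← smul_sum, smul_eq_mul, ← mul_sum] at hu' hv'
  rw [sum_sub_distrib, mul_sub]
  linarith

theorem mirrorProx_stepSize_le {Lxx Lxy Lyx Lyy RX RY L η : ℝ} (hRX : 0 < RX) (hRY : 0 < RY)
    (hL : L = max (max (Lxx * RX ^ 2) (Lxy * RX * RY)) (max (Lyx * RY * RX) (Lyy * RY ^ 2)))
    (hLpos : 0 < L) (hη : η = 1 / (2 * L)) :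
    η * Lxx ≤ 1 / (2 * RX ^ 2) ∧ η * Lxy ≤ 1 / (2 * (RX * RY)) ∧
      η * Lyx ≤ 1 / (2 * (RY * RX)) ∧ η * Lyy ≤ 1 / (2 * RY ^ 2) := by
  have key : ∀ M R : ℝ, 0 < R → M * R ≤ L → η * M ≤ 1 / (2 * R) := fun M R hR hM => by
    rw [hη, div_mul_eq_mul_div, one_mul, div_le_div_iff₀ (by positivity) (by positivity)]
    linarith
  rw [hL] at key
  exact ⟨key _ _ (by positivity) (by rw [mul_comm]; exact le_max_of_le_left (le_max_left _ _)),
    key _ _ (by positivity) (by rw [← mul_assoc]; exact le_max_of_le_left (le_max_right _ _)),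
    key _ _ (by positivity) (by rw [← mul_assoc]; exact le_max_of_le_right (le_max_left _ _)),
    key _ _ (by positivity) (by rw [mul_comm]; exact le_max_of_le_right (le_max_right _ _))⟩

theorem mirrorProx_initial_bregman_le_two {E F : Type*} [NormedAddCommGroup E]
    [InnerProductSpace ℝ E] [CompleteSpace E] [NormedAddCommGroup F] [InnerProductSpace ℝ F]
    [CompleteSpace F] {X : Set E} {Y : Set F} (hXc : Convex ℝ X) (hYc : Convex ℝ Y)
    {dX : E → ℝ} {dY : F → ℝ} {gdX : E → E} {gdY : F → F}
    (hgdX : ∀ x ∈ X, HasGradientAt dX (gdX x) x) (hgdY : ∀ y ∈ Y, HasGradientAt dY (gdY y) y)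
    {BX : E → E → ℝ} {BY : F → F → ℝ}
    (hBX : ∀ x x', BX x x' = dX x - dX x' - ⟪gdX x', x - x'⟫)
    (hBY : ∀ y y', BY y y' = dY y - dY y' - ⟪gdY y', y - y'⟫) {RX RY : ℝ}
    (hRX : ∀ x ∈ X, ∀ x' ∈ X, dX x - dX x' ≤ RX ^ 2)
    (hRY : ∀ y ∈ Y, ∀ y' ∈ Y, dY y - dY y' ≤ RY ^ 2) (hRXpos : 0 < RX) (hRYpos : 0 < RY)
    {x₁ x : E} {y₁ y : F} (hx₁ : x₁ ∈ X) (hx : x ∈ X) (hy₁ : y₁ ∈ Y) (hy : y ∈ Y)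
    (hinit : ∀ ξ ∈ X, ∀ ζ ∈ Y,
      1 / RX ^ 2 * dX x₁ + 1 / RY ^ 2 * dY y₁ ≤ 1 / RX ^ 2 * dX ξ + 1 / RY ^ 2 * dY ζ) :
    1 / RX ^ 2 * BX x x₁ + 1 / RY ^ 2 * BY y y₁ ≤ 2 := by
  have hminX : IsMinOn dX X x₁ := fun ξ hξ =>
    (mul_le_mul_iff_of_pos_left (by positivity : (0 : ℝ) < 1 / RX ^ 2)).1
      (by linarith [hinit ξ hξ y₁ hy₁])
  have hminY : IsMinOn dY Y y₁ := fun ζ hζ =>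
    (mul_le_mul_iff_of_pos_left (by positivity : (0 : ℝ) < 1 / RY ^ 2)).1
      (by linarith [hinit x₁ hx₁ ζ hζ])
  linarith [one_div_sq_mul_bregman_le_one_of_isMinOn hXc hBX (hgdX _ hx₁) hminX hx₁ hx hRX,
    one_div_sq_mul_bregman_le_one_of_isMinOn hYc hBY (hgdY _ hy₁) hminY hy₁ hy hRY]

theorem mirrorProx_step_le {E F : Type*} [NormedAddCommGroup E] [InnerProductSpace ℝ E]
    [CompleteSpace E] [NormedAddCommGroup F] [InnerProductSpace ℝ F] [CompleteSpace F]
    {X : Set E} {Y : Set F} (hXc : Convex ℝ X) (hYc : Convex ℝ Y)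
    {nX : E → ℝ} {nY : F → ℝ} (hnX : ∀ w, 0 ≤ nX w) (hnY : ∀ w, 0 ≤ nY w)
    {φ : E → F → ℝ} {gx : E → F → E} {gy : E → F → F}
    (hgx : ∀ x ∈ X, ∀ y ∈ Y, HasGradientAt (fun x' => φ x' y) (gx x y) x)
    (hgy : ∀ x ∈ X, ∀ y ∈ Y, HasGradientAt (fun y' => φ x y') (gy x y) y)
    (hconv : ∀ y ∈ Y, ConvexOn ℝ X (fun x => φ x y))
    (hconc : ∀ x ∈ X, ConcaveOn ℝ Y (fun y => φ x y))
    {Lxx Lxy Lyx Lyy RX RY η : ℝ}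
    (hLxx : ∀ x ∈ X, ∀ x' ∈ X, ∀ y ∈ Y, ∀ w : E,
      ⟪gx x y - gx x' y, w⟫ ≤ Lxx * nX (x - x') * nX w)
    (hLxy : ∀ x ∈ X, ∀ y ∈ Y, ∀ y' ∈ Y, ∀ w : E,
      ⟪gx x y - gx x y', w⟫ ≤ Lxy * nY (y - y') * nX w)
    (hLyx : ∀ x ∈ X, ∀ x' ∈ X, ∀ y ∈ Y, ∀ w : F,
      ⟪gy x y - gy x' y, w⟫ ≤ Lyx * nX (x - x') * nY w)
    (hLyy : ∀ x ∈ X, ∀ y ∈ Y, ∀ y' ∈ Y, ∀ w : F,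
      ⟪gy x y - gy x y', w⟫ ≤ Lyy * nY (y - y') * nY w)
    {dX : E → ℝ} {dY : F → ℝ} {gdX : E → E} {gdY : F → F}
    (hgdX : ∀ x ∈ X, HasGradientAt dX (gdX x) x)
    (hgdY : ∀ y ∈ Y, HasGradientAt dY (gdY y) y)
    {BX : E → E → ℝ} {BY : F → F → ℝ}
    (hBX : ∀ x x', BX x x' = dX x - dX x' - ⟪gdX x', x - x'⟫)
    (hBY : ∀ y y', BY y y' = dY y - dY y' - ⟪gdY y', y - y'⟫)
    (hscX : ∀ x ∈ X, ∀ x' ∈ X, (1 / 2) * nX (x - x') ^ 2 ≤ BX x x')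
    (hscY : ∀ y ∈ Y, ∀ y' ∈ Y, (1 / 2) * nY (y - y') ^ 2 ≤ BY y y')
    (hRX : 0 < RX) (hRY : 0 < RY) (hη : 0 ≤ η)
    (hηxx : η * Lxx ≤ 1 / (2 * RX ^ 2)) (hηxy : η * Lxy ≤ 1 / (2 * (RX * RY)))
    (hηyx : η * Lyx ≤ 1 / (2 * (RY * RX))) (hηyy : η * Lyy ≤ 1 / (2 * RY ^ 2))
    {p u x' x : E} {q v y' y : F} (hp : p ∈ X) (hu : u ∈ X) (hx' : x' ∈ X) (hx : x ∈ X)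
    (hq : q ∈ Y) (hv : v ∈ Y) (hy' : y' ∈ Y) (hy : y ∈ Y)
    (hstep1 : ∀ ξ ∈ X, ∀ ζ ∈ Y,
      η * (⟪gx p q, u⟫ - ⟪gy p q, v⟫) + 1 / RX ^ 2 * BX u p + 1 / RY ^ 2 * BY v q
        ≤ η * (⟪gx p q, ξ⟫ - ⟪gy p q, ζ⟫) + 1 / RX ^ 2 * BX ξ p + 1 / RY ^ 2 * BY ζ q)
    (hstep2 : ∀ ξ ∈ X, ∀ ζ ∈ Y,
      η * (⟪gx u v, x'⟫ - ⟪gy u v, y'⟫) + 1 / RX ^ 2 * BX x' p + 1 / RY ^ 2 * BY y' q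
        ≤ η * (⟪gx u v, ξ⟫ - ⟪gy u v, ζ⟫) + 1 / RX ^ 2 * BX ξ p + 1 / RY ^ 2 * BY ζ q) :
    η * (φ u y - φ x v) ≤ (1 / RX ^ 2 * BX x p + 1 / RY ^ 2 * BY y q)
      - (1 / RX ^ 2 * BX x x' + 1 / RY ^ 2 * BY y y') := by
  have hu₀ : IsMinOn (fun ξ => ⟪η • gx p q, ξ⟫ + 1 / RX ^ 2 * BX ξ p) X u := fun ξ hξ => by
    simp only [Set.mem_ofPred_eq, real_inner_smul_left]; linarith [hstep1 ξ hξ v hv]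
  have hx'₁ : IsMinOn (fun ξ => ⟪η • gx u v, ξ⟫ + 1 / RX ^ 2 * BX ξ p) X x' := fun ξ hξ => by
    simp only [Set.mem_ofPred_eq, real_inner_smul_left]; linarith [hstep2 ξ hξ y' hy']
  have hv₀ : IsMinOn (fun ζ => ⟪(-η) • gy p q, ζ⟫ + 1 / RY ^ 2 * BY ζ q) Y v := fun ζ hζ => by
    simp only [Set.mem_ofPred_eq, real_inner_smul_left]; linarith [hstep1 u hu ζ hζ]
  have hy'₁ : IsMinOn (fun ζ => ⟪(-η) • gy u v, ζ⟫ + 1 / RY ^ 2 * BY ζ q) Y y' := fun ζ hζ => by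
    simp only [Set.mem_ofPred_eq, real_inner_smul_left]; linarith [hstep2 x' hx' ζ hζ]
  have hex := inner_sub_le_of_extragradient hXc hgdX hBX hu hx' hx hu₀ hx'₁
  have hey := inner_sub_le_of_extragradient hYc hgdY hBY hv hy' hy hv₀ hy'₁
  have hφx := ConvexOn.add_inner_sub_le_of_hasGradientAt (hconv v hv) (hgx u hu v hv) hu hx
  have hφy := ConcaveOn.le_add_inner_sub_of_hasGradientAt (hconc u hu) (hgy u hu v hv) hv hy
  obtain ⟨s, hs, hs2, hsx⟩ := exists_inner_le_mul_of_half_sq_le_bregman hXc hBX hnX hscX hx' hu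
    (Δ := gx u v - gx p q) (K := Lxx * nX (u - p) + Lxy * nY (v - q)) fun w => by
      have h₁ := hLxx u hu p hp v hv w
      have h₂ := hLxy p hp v hv q hq w
      rw [show gx u v - gx p q = (gx u v - gx p v) + (gx p v - gx p q) by abel, inner_add_left]
      linarith
  have hty : ⟪gy u v - gy p q, y' - v⟫ ≤ (Lyy * nY (v - q) + Lyx * nX (u - p)) * nY (y' - v) := by
    have h₁ := hLyy u hu v hv q hq (y' - v)
    have h₂ := hLyx u hu p hp q hq (y' - v)
    rw [show gy u v - gy p q = (gy u v - gy u q) + (gy u q - gy p q) by abel, inner_add_left]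
    linarith
  have ha : nX (u - p) ^ 2 ≤ 2 * BX u p := by linarith [hscX u hu p hp]
  have hb : nY (v - q) ^ 2 ≤ 2 * BY v q := by linarith [hscY v hv q hq]
  have hs' : nY (y' - v) ^ 2 ≤ 2 * BY y' v := by linarith [hscY y' hy' v hv]
  have hrx := mul_le_of_sq_le_two_mul hRX hRY (hnX _) (hnY _) hs hηxx hηxy ha hb hs2
  have hry := mul_le_of_sq_le_two_mul hRY hRX (hnY _) (hnX _) (hnY _) hηyy hηyx hb ha hs'
  have hsx' := mul_le_mul_of_nonneg_left hsx hη
  have hty' := mul_le_mul_of_nonneg_left hty hη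
  have hgap := mul_le_mul_of_nonneg_left (show φ u y - φ x v ≤ ⟪gx u v, u - x⟫ - ⟪gy u v, v - y⟫
    by simp only [inner_sub_right] at hφx hφy ⊢; linarith) hη
  simp only [inner_sub_left, inner_sub_right, real_inner_smul_left] at hex hey hsx' hty' hgap
  linarith

theorem mirror_prox_saddle_point_general
    {E F : Type*} [NormedAddCommGroup E] [InnerProductSpace ℝ E] [CompleteSpace E]
    [NormedAddCommGroup F] [InnerProductSpace ℝ F] [CompleteSpace F]
    (X : Set E) (Y : Set F)
    (hXc : Convex ℝ X) (hYc : Convex ℝ Y)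
    (nX : E → ℝ) (nY : F → ℝ)
    (hnX : ∀ w, 0 ≤ nX w) (hnY : ∀ w, 0 ≤ nY w)
    (φ : E → F → ℝ)
    (gx : E → F → E) (gy : E → F → F)
    (hgx : ∀ x ∈ X, ∀ y ∈ Y, HasGradientAt (fun x' => φ x' y) (gx x y) x)
    (hgy : ∀ x ∈ X, ∀ y ∈ Y, HasGradientAt (fun y' => φ x y') (gy x y) y)
    (hconv : ∀ y ∈ Y, ConvexOn ℝ X (fun x => φ x y))
    (hconc : ∀ x ∈ X, ConcaveOn ℝ Y (fun y => φ x y))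
    (Lxx Lxy Lyx Lyy RX RY : ℝ)
    -- `(Lxx, Lxy, Lyx, Lyy)`-smoothness in dual-norm form
    (hLxx : ∀ x ∈ X, ∀ x' ∈ X, ∀ y ∈ Y, ∀ w : E,
      ⟪gx x y - gx x' y, w⟫ ≤ Lxx * nX (x - x') * nX w)
    (hLxy : ∀ x ∈ X, ∀ y ∈ Y, ∀ y' ∈ Y, ∀ w : E,
      ⟪gx x y - gx x y', w⟫ ≤ Lxy * nY (y - y') * nX w)
    (hLyx : ∀ x ∈ X, ∀ x' ∈ X, ∀ y ∈ Y, ∀ w : F,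
      ⟪gy x y - gy x' y, w⟫ ≤ Lyx * nX (x - x') * nY w)
    (hLyy : ∀ x ∈ X, ∀ y ∈ Y, ∀ y' ∈ Y, ∀ w : F,
      ⟪gy x y - gy x y', w⟫ ≤ Lyy * nY (y - y') * nY w)
    -- prox-functions, their gradients and Bregman divergences
    (dX : E → ℝ) (dY : F → ℝ) (gdX : E → E) (gdY : F → F)
    (hgdX : ∀ x ∈ X, HasGradientAt dX (gdX x) x)
    (hgdY : ∀ y ∈ Y, HasGradientAt dY (gdY y) y)
    (BX : E → E → ℝ) (BY : F → F → ℝ)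
    (hBX : ∀ x x', BX x x' = dX x - dX x' - ⟪gdX x', x - x'⟫)
    (hBY : ∀ y y', BY y y' = dY y - dY y' - ⟪gdY y', y - y'⟫)
    -- 1-strong convexity of the prox-functions with respect to `nX`, `nY`
    (hscX : ∀ x ∈ X, ∀ x' ∈ X, (1 / 2) * nX (x - x') ^ 2 ≤ BX x x')
    (hscY : ∀ y ∈ Y, ∀ y' ∈ Y, (1 / 2) * nY (y - y') ^ 2 ≤ BY y y')
    -- Bregman radii
    (hRX : ∀ x ∈ X, ∀ x' ∈ X, dX x - dX x' ≤ RX ^ 2)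
    (hRY : ∀ y ∈ Y, ∀ y' ∈ Y, dY y - dY y' ≤ RY ^ 2)
    (hRXpos : 0 < RX) (hRYpos : 0 < RY)
    (ε : ℝ) (hε : 0 < ε)
    (L : ℝ)
    (hL : L = max (max (Lxx * RX ^ 2) (Lxy * RX * RY))
              (max (Lyx * RY * RX) (Lyy * RY ^ 2)))
    (hLpos : 0 < L)
    (η : ℝ) (hη : η = 1 / (2 * L))
    (N : ℕ) (hN : (4 / ε) * L ≤ N) (hN1 : 1 ≤ N)
    -- iterates: `z^k = (xk k, yk k)`, `(u^{k+1}, v^{k+1})` the intermediate points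
    (xk uk : ℕ → E) (yk vk : ℕ → F)
    (hxkX : ∀ k, xk k ∈ X) (hykY : ∀ k, yk k ∈ Y)
    (hukX : ∀ k, uk k ∈ X) (hvkY : ∀ k, vk k ∈ Y)
    -- `z¹ = argmin_{z ∈ Z} d_Z(z)`
    (hinit : ∀ x ∈ X, ∀ y ∈ Y,
      (1 / RX ^ 2) * dX (xk 1) + (1 / RY ^ 2) * dY (yk 1)
        ≤ (1 / RX ^ 2) * dX x + (1 / RY ^ 2) * dY y)
    -- `(u^{k+1}, v^{k+1}) = argmin_{z ∈ Z} { η⟨G(z^k), z⟩ + B_Z(z, z^k) }`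
    (hstep1 : ∀ k ≥ 1, ∀ x ∈ X, ∀ y ∈ Y,
      η * (⟪gx (xk k) (yk k), uk (k + 1)⟫ - ⟪gy (xk k) (yk k), vk (k + 1)⟫)
          + (1 / RX ^ 2) * BX (uk (k + 1)) (xk k)
          + (1 / RY ^ 2) * BY (vk (k + 1)) (yk k)
        ≤ η * (⟪gx (xk k) (yk k), x⟫ - ⟪gy (xk k) (yk k), y⟫)
          + (1 / RX ^ 2) * BX x (xk k) + (1 / RY ^ 2) * BY y (yk k))
    -- `z^{k+1} = argmin_{z ∈ Z} { η⟨G(u^{k+1}, v^{k+1}), z⟩ + B_Z(z, z^k) }`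
    (hstep2 : ∀ k ≥ 1, ∀ x ∈ X, ∀ y ∈ Y,
      η * (⟪gx (uk (k + 1)) (vk (k + 1)), xk (k + 1)⟫
            - ⟪gy (uk (k + 1)) (vk (k + 1)), yk (k + 1)⟫)
          + (1 / RX ^ 2) * BX (xk (k + 1)) (xk k)
          + (1 / RY ^ 2) * BY (yk (k + 1)) (yk k)
        ≤ η * (⟪gx (uk (k + 1)) (vk (k + 1)), x⟫
            - ⟪gy (uk (k + 1)) (vk (k + 1)), y⟫)
          + (1 / RX ^ 2) * BX x (xk k) + (1 / RY ^ 2) * BY y (yk k))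
    -- averaged output
    (xt : E) (yt : F)
    (hxt : xt = (N : ℝ)⁻¹ • ∑ k ∈ Finset.Icc 1 N, uk (k + 1))
    (hyt : yt = (N : ℝ)⁻¹ • ∑ k ∈ Finset.Icc 1 N, vk (k + 1)) :
    ∀ x ∈ X, ∀ y ∈ Y, φ xt y - φ x yt ≤ ε := by
  intro x hx y hy
  obtain ⟨hηxx, hηxy, hηyx, hηyy⟩ := mirrorProx_stepSize_le hRXpos hRYpos hL hLpos hη
  let D : ℕ → ℝ := fun k => 1 / RX ^ 2 * BX x (xk k) + 1 / RY ^ 2 * BY y (yk k)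
  have hstep : ∀ k ∈ Finset.Icc 1 N, η * (φ (uk (k + 1)) y - φ x (vk (k + 1))) ≤ D k - D (k + 1) :=
    fun k hk => mirrorProx_step_le hXc hYc hnX hnY hgx hgy hconv hconc hLxx hLxy hLyx hLyy
      hgdX hgdY hBX hBY hscX hscY hRXpos hRYpos (by rw [hη]; positivity) hηxx hηxy hηyx hηyy
      (hxkX k) (hukX _) (hxkX _) hx (hykY k) (hvkY _) (hykY _) hy
      (hstep1 k (Finset.mem_Icc.1 hk).1) (hstep2 k (Finset.mem_Icc.1 hk).1)
  have hD₁ : D 1 ≤ 2 := mirrorProx_initial_bregman_le_two hXc hYc hgdX hgdY hBX hBY hRX hRY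
    hRXpos hRYpos (hxkX 1) hx (hykY 1) hy hinit
  have hD₀ : 0 ≤ D (N + 1) := by
    have := (by positivity : (0 : ℝ) ≤ 1 / 2 * _ ^ 2).trans (hscX x hx _ (hxkX (N + 1)))
    have := (by positivity : (0 : ℝ) ≤ 1 / 2 * _ ^ 2).trans (hscY y hy _ (hykY (N + 1)))
    positivity
  have hsum : η * ∑ k ∈ Finset.Icc 1 N, (φ (uk (k + 1)) y - φ x (vk (k + 1))) ≤ 2 :=
    calc _ = ∑ k ∈ Finset.Icc 1 N, η * (φ (uk (k + 1)) y - φ x (vk (k + 1))) := Finset.mul_sum _ _ _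
      _ ≤ ∑ k ∈ Finset.Icc 1 N, (D k - D (k + 1)) := Finset.sum_le_sum hstep
      _ = D 1 - D (N + 1) := by simpa only [neg_sub_neg] using Finset.sum_Icc_sub hN1 (fun k => -D k)
      _ ≤ 2 := by linarith
  have hgap := sub_le_inv_card_mul_sum_of_convexOn_concaveOn (hconv y hy) (hconc x hx)
    (Finset.nonempty_Icc.2 hN1) (fun k _ => hukX (k + 1)) (fun k _ => hvkY (k + 1))
  rw [Nat.card_Icc, Nat.add_sub_cancel, ← hxt, ← hyt] at hgap
  refine hgap.trans ?_
  rw [inv_mul_le_iff₀ (by exact_mod_cast hN1)]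
  rw [hη, one_div, ← div_eq_inv_mul, div_le_iff₀ (by positivity)] at hsum
  rw [div_mul_eq_mul_div, div_le_iff₀ hε] at hN
  linarith

/-- Mirror prox for convex-concave saddle-point problems.  `φ : X × Y → ℝ` is
convex in `x`, concave in `y`, and `(Lxx, Lxy, Lyx, Lyy)`-smooth with respect
to norms `nX`, `nY` (smoothness stated in the equivalent dual-norm form, via
inner products against arbitrary test vectors).  The Bregman setup on
`Z = X × Y` uses `B_Z(z, z̆) = (1/R_X²)B_X(x, x̆) + (1/R_Y²)B_Y(y, y̆)` with
prox-functions `dX`, `dY` that are 1-strongly convex w.r.t. `nX`, `nY` and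
have Bregman radii `R_X`, `R_Y`.  With step
`η = 1/(2 max{Lxx R_X², Lxy R_X R_Y, Lyx R_Y R_X, Lyy R_Y²})` and
`N ≥ (4/ε)·max{...}` iterations (with `z¹ = argmin d_Z`, and updates given as
exact minimizers of the mirror-prox subproblems), the averaged iterates
`(x̃, ỹ)` satisfy `max_{y∈Y} φ(x̃,y) − min_{x∈X} φ(x,ỹ) ≤ ε`. -/
theorem mirror_prox_saddle_point
    {E F : Type*} [NormedAddCommGroup E] [InnerProductSpace ℝ E] [CompleteSpace E]
    [NormedAddCommGroup F] [InnerProductSpace ℝ F] [CompleteSpace F]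
    (X : Set E) (Y : Set F)
    (hXc : Convex ℝ X) (hYc : Convex ℝ Y)
    (hXcp : IsCompact X) (hYcp : IsCompact Y)
    (hXne : X.Nonempty) (hYne : Y.Nonempty)
    (nX : E → ℝ) (nY : F → ℝ)
    (hnX : ∀ w, 0 ≤ nX w) (hnY : ∀ w, 0 ≤ nY w)
    (φ : E → F → ℝ)
    (gx : E → F → E) (gy : E → F → F)
    (hgx : ∀ x ∈ X, ∀ y ∈ Y, HasGradientAt (fun x' => φ x' y) (gx x y) x)
    (hgy : ∀ x ∈ X, ∀ y ∈ Y, HasGradientAt (fun y' => φ x y') (gy x y) y)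
    (hconv : ∀ y ∈ Y, ConvexOn ℝ X (fun x => φ x y))
    (hconc : ∀ x ∈ X, ConcaveOn ℝ Y (fun y => φ x y))
    (Lxx Lxy Lyx Lyy RX RY : ℝ)
    -- `(Lxx, Lxy, Lyx, Lyy)`-smoothness in dual-norm form
    (hLxx : ∀ x ∈ X, ∀ x' ∈ X, ∀ y ∈ Y, ∀ w : E,
      ⟪gx x y - gx x' y, w⟫ ≤ Lxx * nX (x - x') * nX w)
    (hLxy : ∀ x ∈ X, ∀ y ∈ Y, ∀ y' ∈ Y, ∀ w : E,
      ⟪gx x y - gx x y', w⟫ ≤ Lxy * nY (y - y') * nX w)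
    (hLyx : ∀ x ∈ X, ∀ x' ∈ X, ∀ y ∈ Y, ∀ w : F,
      ⟪gy x y - gy x' y, w⟫ ≤ Lyx * nX (x - x') * nY w)
    (hLyy : ∀ x ∈ X, ∀ y ∈ Y, ∀ y' ∈ Y, ∀ w : F,
      ⟪gy x y - gy x y', w⟫ ≤ Lyy * nY (y - y') * nY w)
    -- prox-functions, their gradients and Bregman divergences
    (dX : E → ℝ) (dY : F → ℝ) (gdX : E → E) (gdY : F → F)
    (hgdX : ∀ x ∈ X, HasGradientAt dX (gdX x) x)
    (hgdY : ∀ y ∈ Y, HasGradientAt dY (gdY y) y)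
    (BX : E → E → ℝ) (BY : F → F → ℝ)
    (hBX : ∀ x x', BX x x' = dX x - dX x' - ⟪gdX x', x - x'⟫)
    (hBY : ∀ y y', BY y y' = dY y - dY y' - ⟪gdY y', y - y'⟫)
    -- 1-strong convexity of the prox-functions with respect to `nX`, `nY`
    (hscX : ∀ x ∈ X, ∀ x' ∈ X, (1 / 2) * nX (x - x') ^ 2 ≤ BX x x')
    (hscY : ∀ y ∈ Y, ∀ y' ∈ Y, (1 / 2) * nY (y - y') ^ 2 ≤ BY y y')
    -- Bregman radii
    (hRX : ∀ x ∈ X, ∀ x' ∈ X, dX x - dX x' ≤ RX ^ 2)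
    (hRY : ∀ y ∈ Y, ∀ y' ∈ Y, dY y - dY y' ≤ RY ^ 2)
    (hRXpos : 0 < RX) (hRYpos : 0 < RY)
    (ε : ℝ) (hε : 0 < ε)
    (L : ℝ)
    (hL : L = max (max (Lxx * RX ^ 2) (Lxy * RX * RY))
              (max (Lyx * RY * RX) (Lyy * RY ^ 2)))
    (hLpos : 0 < L)
    (η : ℝ) (hη : η = 1 / (2 * L))
    (N : ℕ) (hN : (4 / ε) * L ≤ N) (hN1 : 1 ≤ N)
    -- iterates: `z^k = (xk k, yk k)`, `(u^{k+1}, v^{k+1})` the intermediate points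
    (xk uk : ℕ → E) (yk vk : ℕ → F)
    (hxkX : ∀ k, xk k ∈ X) (hykY : ∀ k, yk k ∈ Y)
    (hukX : ∀ k, uk k ∈ X) (hvkY : ∀ k, vk k ∈ Y)
    -- `z¹ = argmin_{z ∈ Z} d_Z(z)`
    (hinit : ∀ x ∈ X, ∀ y ∈ Y,
      (1 / RX ^ 2) * dX (xk 1) + (1 / RY ^ 2) * dY (yk 1)
        ≤ (1 / RX ^ 2) * dX x + (1 / RY ^ 2) * dY y)
    -- `(u^{k+1}, v^{k+1}) = argmin_{z ∈ Z} { η⟨G(z^k), z⟩ + B_Z(z, z^k) }`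
    (hstep1 : ∀ k ≥ 1, ∀ x ∈ X, ∀ y ∈ Y,
      η * (⟪gx (xk k) (yk k), uk (k + 1)⟫ - ⟪gy (xk k) (yk k), vk (k + 1)⟫)
          + (1 / RX ^ 2) * BX (uk (k + 1)) (xk k)
          + (1 / RY ^ 2) * BY (vk (k + 1)) (yk k)
        ≤ η * (⟪gx (xk k) (yk k), x⟫ - ⟪gy (xk k) (yk k), y⟫)
          + (1 / RX ^ 2) * BX x (xk k) + (1 / RY ^ 2) * BY y (yk k))
    -- `z^{k+1} = argmin_{z ∈ Z} { η⟨G(u^{k+1}, v^{k+1}), z⟩ + B_Z(z, z^k) }`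
    (hstep2 : ∀ k ≥ 1, ∀ x ∈ X, ∀ y ∈ Y,
      η * (⟪gx (uk (k + 1)) (vk (k + 1)), xk (k + 1)⟫
            - ⟪gy (uk (k + 1)) (vk (k + 1)), yk (k + 1)⟫)
          + (1 / RX ^ 2) * BX (xk (k + 1)) (xk k)
          + (1 / RY ^ 2) * BY (yk (k + 1)) (yk k)
        ≤ η * (⟪gx (uk (k + 1)) (vk (k + 1)), x⟫
            - ⟪gy (uk (k + 1)) (vk (k + 1)), y⟫)
          + (1 / RX ^ 2) * BX x (xk k) + (1 / RY ^ 2) * BY y (yk k))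
    -- averaged output
    (xt : E) (yt : F)
    (hxt : xt = (N : ℝ)⁻¹ • ∑ k ∈ Finset.Icc 1 N, uk (k + 1))
    (hyt : yt = (N : ℝ)⁻¹ • ∑ k ∈ Finset.Icc 1 N, vk (k + 1)) :
    ∀ x ∈ X, ∀ y ∈ Y, φ xt y - φ x yt ≤ ε :=
  mirror_prox_saddle_point_general X Y hXc hYc nX nY hnX hnY φ gx gy hgx hgy hconv hconc Lxx Lxy Lyx
    Lyy RX RY hLxx hLxy hLyx hLyy dX dY gdX gdY hgdX hgdY BX BY hBX hBY hscX hscY hRX hRY hRXpos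
    hRYpos ε hε L hL hLpos η hη N hN hN1 xk uk yk vk hxkX hykY hukX hvkY hinit hstep1 hstep2 xt yt
    hxt hyt
end
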